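/- arXiv:2207.02969 — 2 statements merged into one kernel-verified Lean document; each statement's English description precedes it below -/
import Mathlib

section
/- A point (x₀:x₁:x₂) ∈ F has nontrivial stabilizer under the action φ of (ℤ/7)² if and only if x₀x₁x₂ = 0; there are exactly 21 such points on F. -/
/-- The Fermat septic as a subset of `ℙ²(ℂ)` (the condition on a representative is
scale-invariant, hence well defined). -/
def fermatSeptic : Set (Projectivization ℂ (Fin 3 → ℂ)) :=
  {p | p.rep 0 ^ 7 + p.rep 1 ^ 7 + p.rep 2 ^ 7 = 0}

/-- The diagonal action of `(ℤ/7)²` on `ℂ³`: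
`(a,b)` sends `(x₀, x₁, x₂)` to `(x₀, ζ₇ᵃ x₁, ζ₇ᵇ x₂)`. -/
noncomputable def diagAct (ζ : ℂ) (g : ZMod 7 × ZMod 7) (v : Fin 3 → ℂ) : Fin 3 → ℂ :=
  ![v 0, ζ ^ g.1.val * v 1, ζ ^ g.2.val * v 2]

/-- The 21 special vectors. -/
noncomputable def fsVec (ζ : ℂ) (ik : Fin 3 × Fin 7) : Fin 3 → ℂ :=
  ![![0, 1, -ζ ^ (ik.2 : ℕ)], ![1, 0, -ζ ^ (ik.2 : ℕ)], ![1, -ζ ^ (ik.2 : ℕ), 0]] ik.1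

lemma fsVec_ne (ζ : ℂ) (ik : Fin 3 × Fin 7) : fsVec ζ ik ≠ 0 := by
  rcases ik with ⟨i, k⟩
  fin_cases i <;> intro h
  · simpa [fsVec, Matrix.vecHead, Matrix.vecTail] using congr_fun h 1
  · simpa [fsVec, Matrix.vecHead, Matrix.vecTail] using congr_fun h 0
  · simpa [fsVec, Matrix.vecHead, Matrix.vecTail] using congr_fun h 0

/-- The 21 special points. -/
noncomputable def fsPt (ζ : ℂ) (ik : Fin 3 × Fin 7) : Projectivization ℂ (Fin 3 → ℂ) :=
  Projectivization.mk ℂ (fsVec ζ ik) (fsVec_ne ζ ik)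

lemma rep_smul {v : Fin 3 → ℂ} (hv : v ≠ 0) :
    ∃ c : ℂ, c ≠ 0 ∧ (Projectivization.mk ℂ v hv).rep = c • v := by
  obtain ⟨a, ha⟩ := Projectivization.exists_smul_eq_mk_rep ℂ v hv
  exact ⟨(a : ℂ), a.ne_zero, by rw [← ha, Units.smul_def]⟩

lemma fsPt_inj (ζ : ℂ) (hζ : IsPrimitiveRoot ζ 7) : Function.Injective (fsPt ζ) := by
  have hzne : ζ ≠ 0 := hζ.ne_zero (by norm_num)
  rintro ⟨i, k⟩ ⟨j, l⟩ h
  rw [fsPt, fsPt, Projectivization.mk_eq_mk_iff'] at h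
  obtain ⟨a, ha⟩ := h
  fin_cases i <;> fin_cases j
  · -- (0,0)
    have h1 := congr_fun ha 1
    have h2 := congr_fun ha 2
    simp [fsVec, Matrix.vecHead, Matrix.vecTail] at h1 h2
    rw [h1, one_mul] at h2
    have := hζ.pow_inj l.isLt k.isLt h2
    simp only [Prod.mk.injEq]
    exact ⟨by trivial, (Fin.ext this).symm⟩
  · simpa [fsVec, Matrix.vecHead, Matrix.vecTail] using congr_fun ha 1
  · have h0 := congr_fun ha 0
    have h1 := congr_fun ha 1
    simp [fsVec, Matrix.vecHead, Matrix.vecTail] at h0 h1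
    rw [h0] at h1
    norm_num at h1
  · simpa [fsVec, Matrix.vecHead, Matrix.vecTail] using congr_fun ha 0
  · -- (1,1)
    have h0 := congr_fun ha 0
    have h2 := congr_fun ha 2
    simp [fsVec, Matrix.vecHead, Matrix.vecTail] at h0 h2
    rw [h0, one_mul] at h2
    have := hζ.pow_inj l.isLt k.isLt h2
    simp only [Prod.mk.injEq]
    exact ⟨by trivial, (Fin.ext this).symm⟩
  · have h2 := congr_fun ha 2
    simp [fsVec, Matrix.vecHead, Matrix.vecTail, hzne] at h2
  · simpa [fsVec, Matrix.vecHead, Matrix.vecTail] using congr_fun ha 0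
  · have h1 := congr_fun ha 1
    simp [fsVec, Matrix.vecHead, Matrix.vecTail, hzne] at h1
  · -- (2,2)
    have h0 := congr_fun ha 0
    have h1 := congr_fun ha 1
    simp [fsVec, Matrix.vecHead, Matrix.vecTail] at h0 h1
    rw [h0, one_mul] at h1
    have := hζ.pow_inj l.isLt k.isLt h1
    simp only [Prod.mk.injEq]
    exact ⟨by trivial, (Fin.ext this).symm⟩

lemma fs_set_eq (ζ : ℂ) (hζ : IsPrimitiveRoot ζ 7) :
    {p ∈ fermatSeptic | p.rep 0 * p.rep 1 * p.rep 2 = 0} = Set.range (fsPt ζ) := by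
  ext p
  constructor
  · rintro ⟨hF, hprod⟩
    have hF' : p.rep 0 ^ 7 + p.rep 1 ^ 7 + p.rep 2 ^ 7 = 0 := hF
    have hvne := p.rep_nonzero
    rcases mul_eq_zero.1 hprod with h01 | h2
    · rcases mul_eq_zero.1 h01 with h0 | h1
      · -- p.rep 0 = 0
        have h1ne : p.rep 1 ≠ 0 := by
          intro h1
          apply hvne
          have hz2 : p.rep 2 = 0 := by
            have : p.rep 2 ^ 7 = 0 := by rw [h0, h1] at hF'; simpa using hF'
            exact pow_eq_zero_iff (by norm_num) |>.1 this
          funext j; fin_cases j <;> assumption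
        have hroot : (-(p.rep 2 / p.rep 1)) ^ 7 = 1 := by
          have h27 : p.rep 2 ^ 7 = -(p.rep 1 ^ 7) := by
            rw [h0] at hF'; linear_combination hF'
          rw [Odd.neg_pow (Nat.odd_iff.2 rfl), div_pow, h27, neg_div, neg_neg,
            div_self (pow_ne_zero 7 h1ne)]
        obtain ⟨m, hm7, hm⟩ := hζ.eq_pow_of_pow_eq_one hroot
        refine ⟨(0, ⟨m, hm7⟩), ?_⟩
        rw [fsPt, ← Projectivization.mk_rep p, Projectivization.mk_eq_mk_iff']
        refine ⟨(p.rep 1)⁻¹, ?_⟩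
        funext j
        fin_cases j
        · simp [fsVec, Matrix.vecHead, Matrix.vecTail, h0]
        · simpa [fsVec, Matrix.vecHead, Matrix.vecTail] using inv_mul_cancel₀ h1ne
        · simp [fsVec, Matrix.vecHead, Matrix.vecTail]
          rw [hm, neg_neg, inv_mul_eq_div]
      · -- p.rep 1 = 0
        have h0ne : p.rep 0 ≠ 0 := by
          intro h0
          apply hvne
          have hz2 : p.rep 2 = 0 := by
            have : p.rep 2 ^ 7 = 0 := by rw [h0, h1] at hF'; simpa using hF'
            exact pow_eq_zero_iff (by norm_num) |>.1 this
          funext j; fin_cases j <;> assumption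
        have hroot : (-(p.rep 2 / p.rep 0)) ^ 7 = 1 := by
          have h27 : p.rep 2 ^ 7 = -(p.rep 0 ^ 7) := by
            rw [h1] at hF'; linear_combination hF'
          rw [Odd.neg_pow (Nat.odd_iff.2 rfl), div_pow, h27, neg_div, neg_neg,
            div_self (pow_ne_zero 7 h0ne)]
        obtain ⟨m, hm7, hm⟩ := hζ.eq_pow_of_pow_eq_one hroot
        refine ⟨(1, ⟨m, hm7⟩), ?_⟩
        rw [fsPt, ← Projectivization.mk_rep p, Projectivization.mk_eq_mk_iff']
        refine ⟨(p.rep 0)⁻¹, ?_⟩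
        funext j
        fin_cases j
        · simpa [fsVec, Matrix.vecHead, Matrix.vecTail] using inv_mul_cancel₀ h0ne
        · simp [fsVec, Matrix.vecHead, Matrix.vecTail, h1]
        · simp [fsVec, Matrix.vecHead, Matrix.vecTail]
          rw [hm, neg_neg, inv_mul_eq_div]
    · -- p.rep 2 = 0
      have h0ne : p.rep 0 ≠ 0 := by
        intro h0
        apply hvne
        have hz1 : p.rep 1 = 0 := by
          have : p.rep 1 ^ 7 = 0 := by rw [h0, h2] at hF'; simpa using hF'
          exact pow_eq_zero_iff (by norm_num) |>.1 this
        funext j; fin_cases j <;> assumption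
      have hroot : (-(p.rep 1 / p.rep 0)) ^ 7 = 1 := by
        have h27 : p.rep 1 ^ 7 = -(p.rep 0 ^ 7) := by
          rw [h2] at hF'; linear_combination hF'
        rw [Odd.neg_pow (Nat.odd_iff.2 rfl), div_pow, h27, neg_div, neg_neg,
          div_self (pow_ne_zero 7 h0ne)]
      obtain ⟨m, hm7, hm⟩ := hζ.eq_pow_of_pow_eq_one hroot
      refine ⟨(2, ⟨m, hm7⟩), ?_⟩
      rw [fsPt, ← Projectivization.mk_rep p, Projectivization.mk_eq_mk_iff']
      refine ⟨(p.rep 0)⁻¹, ?_⟩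
      funext j
      fin_cases j
      · simpa [fsVec, Matrix.vecHead, Matrix.vecTail] using inv_mul_cancel₀ h0ne
      · simp [fsVec, Matrix.vecHead, Matrix.vecTail]
        rw [hm, neg_neg, inv_mul_eq_div]
      · simp [fsVec, Matrix.vecHead, Matrix.vecTail, h2]
  · rintro ⟨⟨i, k⟩, rfl⟩
    obtain ⟨c, hc, hrep⟩ := rep_smul (fsVec_ne ζ (i, k))
    have key : (fsPt ζ (i, k)).rep = c • fsVec ζ (i, k) := hrep
    have h7 : (ζ ^ (k : ℕ)) ^ 7 = 1 := by
      rw [← pow_mul, mul_comm, pow_mul, hζ.pow_eq_one, one_pow]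
    refine ⟨?_, ?_⟩
    · show (fsPt ζ (i, k)).rep 0 ^ 7 + (fsPt ζ (i, k)).rep 1 ^ 7 +
        (fsPt ζ (i, k)).rep 2 ^ 7 = 0
      rw [key]
      fin_cases i
      · simp [fsVec, Matrix.vecHead, Matrix.vecTail]
        linear_combination (-(c ^ 7)) * h7
      · simp [fsVec, Matrix.vecHead, Matrix.vecTail]
        linear_combination (-(c ^ 7)) * h7
      · simp [fsVec, Matrix.vecHead, Matrix.vecTail]
        linear_combination (-(c ^ 7)) * h7
    · show (fsPt ζ (i, k)).rep 0 * (fsPt ζ (i, k)).rep 1 * (fsPt ζ (i, k)).rep 2 = 0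
      rw [key]
      fin_cases i <;> simp [fsVec, Matrix.vecHead, Matrix.vecTail]

/-- A point `(x₀:x₁:x₂) ∈ F` has nontrivial stabilizer under the action `φ` of `(ℤ/7)²`
(i.e. some nonzero `(a,b)` fixes it projectively) if and only if `x₀x₁x₂ = 0`;
and there are exactly `21` such points on `F`. -/
theorem fermat_septic_nontrivial_stabilizer_iff (ζ : ℂ) (hζ : IsPrimitiveRoot ζ 7) :
    (∀ p ∈ fermatSeptic,
      ((∃ g : ZMod 7 × ZMod 7, g ≠ 0 ∧ ∃ c : ℂ, c ≠ 0 ∧ diagAct ζ g p.rep = c • p.rep) ↔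
        p.rep 0 * p.rep 1 * p.rep 2 = 0)) ∧
    {p ∈ fermatSeptic | p.rep 0 * p.rep 1 * p.rep 2 = 0}.ncard = 21 := by
  constructor
  · intro p _hp
    constructor
    · rintro ⟨g, hg, c, hc, hgc⟩
      by_contra hne
      have hx0 : p.rep 0 ≠ 0 := fun h => hne (by rw [h]; ring)
      have hx1 : p.rep 1 ≠ 0 := fun h => hne (by rw [h]; ring)
      have hx2 : p.rep 2 ≠ 0 := fun h => hne (by rw [h]; ring)
      have h0 : p.rep 0 = c * p.rep 0 := by
        simpa [diagAct, Matrix.vecHead, Matrix.vecTail] using congr_fun hgc 0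
      have h1 : ζ ^ g.1.val * p.rep 1 = c * p.rep 1 := by
        simpa [diagAct, Matrix.vecHead, Matrix.vecTail] using congr_fun hgc 1
      have h2 : ζ ^ g.2.val * p.rep 2 = c * p.rep 2 := by
        simpa [diagAct, Matrix.vecHead, Matrix.vecTail] using congr_fun hgc 2
      have hc1 : c = 1 := by
        apply mul_right_cancel₀ hx0
        rw [one_mul, ← h0]
      rw [hc1, one_mul] at h1 h2
      have hz1 : ζ ^ g.1.val = 1 := mul_right_cancel₀ hx1 (by rw [h1, one_mul])
      have hz2 : ζ ^ g.2.val = 1 := mul_right_cancel₀ hx2 (by rw [h2, one_mul])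
      have hg1 : g.1 = 0 := by
        have hd := (hζ.pow_eq_one_iff_dvd _).1 hz1
        exact (ZMod.val_eq_zero _).1 (Nat.eq_zero_of_dvd_of_lt hd (ZMod.val_lt g.1))
      have hg2 : g.2 = 0 := by
        have hd := (hζ.pow_eq_one_iff_dvd _).1 hz2
        exact (ZMod.val_eq_zero _).1 (Nat.eq_zero_of_dvd_of_lt hd (ZMod.val_lt g.2))
      exact hg (by simp [Prod.ext_iff, hg1, hg2])
    · intro h
      rcases mul_eq_zero.1 h with h01 | h2
      · rcases mul_eq_zero.1 h01 with h0 | h1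
        · refine ⟨(1, 1), by decide, ζ, hζ.ne_zero (by norm_num), ?_⟩
          funext j
          fin_cases j <;>
            simp [diagAct, Matrix.vecHead, Matrix.vecTail, h0,
              show ((1 : ZMod 7)).val = 1 from rfl]
        · refine ⟨(1, 0), by decide, 1, one_ne_zero, ?_⟩
          funext j
          fin_cases j <;>
            simp [diagAct, Matrix.vecHead, Matrix.vecTail, h1,
              show ((1 : ZMod 7)).val = 1 from rfl, show ((0 : ZMod 7)).val = 0 from rfl]
      · refine ⟨(0, 1), by decide, 1, one_ne_zero, ?_⟩
        funext j
        fin_cases j <;>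
          simp [diagAct, Matrix.vecHead, Matrix.vecTail, h2,
            show ((1 : ZMod 7)).val = 1 from rfl, show ((0 : ZMod 7)).val = 0 from rfl]
  · rw [fs_set_eq ζ hζ, ← Set.image_univ,
      Set.ncard_image_of_injective _ (fsPt_inj ζ hζ), Set.ncard_univ]
    simp [Nat.card_eq_fintype_card]
end

section
/- The map π : F → ℙ¹ given by (x₀:x₁:x₂) ↦ (x₁⁷ : x₂⁷) is a well-defined surjective morphism of degree 49 whose fibers are exactly the orbits of the (ℤ/7)²-action φ on F. -/
/-! The seventh powers of a point of `F` lie on the line `X + Y + Z = 0`, on which a point is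
determined up to scaling by its last two coordinates. Hence two points of `F` with the same image
have coordinatewise proportional seventh powers, and extracting seventh roots leaves a seventh
root of unity in each coordinate; normalising the first coordinate, this is an element of
`(ℤ/7)²`. Away from the branch points all coordinates are nonzero, so the action is free there
and each fibre, being an orbit, has `7² = 49` points. -/

open Projectivization
open scoped LinearAlgebra.Projectivization

theorem Projectivization.exists_rep_mk_eq_smul (K : Type*) {V : Type*} [DivisionRing K]
    [AddCommGroup V] [Module K V] (v : V) (hv : v ≠ 0) :
    ∃ c : K, c ≠ 0 ∧ (mk K v hv).rep = c • v := by
  obtain ⟨a, ha⟩ := exists_smul_eq_mk_rep K v hv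
  exact ⟨a, a.ne_zero, ha.symm⟩

theorem IsPrimitiveRoot.exists_pow_mul_eq_of_pow_eq_pow {R : Type*} [CommRing R] [IsDomain R]
    {ζ : R} {n : ℕ} (hζ : IsPrimitiveRoot ζ n) (hn : n ≠ 0) {x y : R} (h : x ^ n = y ^ n) :
    ∃ k < n, ζ ^ k * y = x := by
  have hx : x ∈ Polynomial.nthRoots n (y ^ n) :=
    (Polynomial.mem_nthRoots (Nat.pos_of_ne_zero hn)).2 h
  rw [hζ.nthRoots_eq rfl] at hx
  simpa using hx

theorem IsPrimitiveRoot.pow_zmod_val_injective {M : Type*} [CommMonoid M] {ζ : M} {n : ℕ}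
    [NeZero n] (hζ : IsPrimitiveRoot ζ n) : Function.Injective fun k : ZMod n => ζ ^ k.val :=
  fun _ _ h => ZMod.val_injective n (hζ.pow_inj (ZMod.val_lt _) (ZMod.val_lt _) h)

theorem exists_pow_eq_and_mul_eq {K : Type*} [Field K] [IsAlgClosed K] {n : ℕ} (hn : n ≠ 0)
    {μ x y : K} (h : x ^ n = μ * y ^ n) : ∃ c : K, c ^ n = μ ∧ c * y = x := by
  by_cases hy : y = 0
  · obtain ⟨c, hc⟩ := IsAlgClosed.exists_pow_nat_eq μ (Nat.pos_of_ne_zero hn)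
    refine ⟨c, hc, ?_⟩
    rw [hy, zero_pow hn, mul_zero, pow_eq_zero_iff hn] at h
    rw [hy, h, mul_zero]
  · refine ⟨x / y, ?_, div_mul_cancel₀ x hy⟩
    rw [div_pow, h, mul_div_cancel_right₀ μ (pow_ne_zero n hy)]

theorem exists_forall_eq_mul_of_cross_eq {K : Type*} [Field K] {x y : Fin 3 → K}
    (hx : x 0 + x 1 + x 2 = 0) (hy : y 0 + y 1 + y 2 = 0) (hy₁₂ : ¬(y 1 = 0 ∧ y 2 = 0))
    (h : x 1 * y 2 = x 2 * y 1) : ∃ μ : K, ∀ i, x i = μ * y i := by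
  suffices ∃ μ : K, x 1 = μ * y 1 ∧ x 2 = μ * y 2 by
    obtain ⟨μ, h₁, h₂⟩ := this
    refine ⟨μ, fun i => ?_⟩
    fin_cases i
    · show x 0 = μ * y 0
      linear_combination hx - μ * hy - h₁ - h₂
    · exact h₁
    · exact h₂
  by_cases hy₁ : y 1 = 0
  · have hy₂ : y 2 ≠ 0 := fun hy₂ => hy₁₂ ⟨hy₁, hy₂⟩
    refine ⟨x 2 / y 2, ?_, (div_mul_cancel₀ _ hy₂).symm⟩
    rw [hy₁, mul_zero] at h ⊢
    exact (mul_eq_zero.1 h).resolve_right hy₂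
  · refine ⟨x 1 / y 1, (div_mul_cancel₀ _ hy₁).symm, ?_⟩
    field_simp
    linear_combination -h

section FermatForm

variable {R : Type*} [CommRing R]

def fermatForm (n : ℕ) (v : Fin 3 → R) : R :=
  v 0 ^ n + v 1 ^ n + v 2 ^ n

theorem fermatForm_smul (n : ℕ) (c : R) (v : Fin 3 → R) :
    fermatForm n (c • v) = c ^ n * fermatForm n v := by
  simp only [fermatForm, Pi.smul_apply, smul_eq_mul, mul_pow]
  ring

theorem not_and_eq_zero_of_fermatForm_eq_zero [NoZeroDivisors R] {n : ℕ} (hn : n ≠ 0)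
    {v : Fin 3 → R} (hv : v ≠ 0) (h : fermatForm n v = 0) : ¬(v 1 = 0 ∧ v 2 = 0) := by
  rintro ⟨h₁, h₂⟩
  have h₀ : v 0 = 0 := by simpa [fermatForm, h₁, h₂, zero_pow hn, hn] using h
  exact hv (funext fun i => by fin_cases i <;> assumption)

end FermatForm

theorem mem_fermatSeptic_iff {p : ℙ ℂ (Fin 3 → ℂ)} :
    p ∈ fermatSeptic ↔ fermatForm 7 p.rep = 0 :=
  Iff.rfl

theorem mk_mem_fermatSeptic_iff (v : Fin 3 → ℂ) (hv : v ≠ 0) :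
    mk ℂ v hv ∈ fermatSeptic ↔ fermatForm 7 v = 0 := by
  obtain ⟨c, hc, hrep⟩ := exists_rep_mk_eq_smul ℂ v hv
  rw [mem_fermatSeptic_iff, hrep, fermatForm_smul, mul_eq_zero, or_iff_right (pow_ne_zero 7 hc)]

theorem not_rep_one_eq_zero_and_rep_two_eq_zero {p : ℙ ℂ (Fin 3 → ℂ)} (hp : p ∈ fermatSeptic) :
    ¬(p.rep 1 = 0 ∧ p.rep 2 = 0) :=
  not_and_eq_zero_of_fermatForm_eq_zero (by norm_num) p.rep_nonzero hp

theorem exists_mem_fermatSeptic_rep_pow_eq (w : ℂ × ℂ) (hw : w ≠ 0) :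
    ∃ p ∈ fermatSeptic, ∃ c : ℂ, c ≠ 0 ∧ p.rep 0 ^ 7 = c * -(w.1 + w.2) ∧
      p.rep 1 ^ 7 = c * w.1 ∧ p.rep 2 ^ 7 = c * w.2 := by
  obtain ⟨x₀, hx₀⟩ := IsAlgClosed.exists_pow_nat_eq (-(w.1 + w.2)) (by norm_num : 0 < 7)
  obtain ⟨x₁, hx₁⟩ := IsAlgClosed.exists_pow_nat_eq w.1 (by norm_num : 0 < 7)
  obtain ⟨x₂, hx₂⟩ := IsAlgClosed.exists_pow_nat_eq w.2 (by norm_num : 0 < 7)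
  have hv : ![x₀, x₁, x₂] ≠ 0 := by
    intro h
    apply hw
    ext
    · simpa [← hx₁] using congrFun h 1
    · simpa [← hx₂] using congrFun h 2
  obtain ⟨c, hc, hrep⟩ := exists_rep_mk_eq_smul ℂ _ hv
  refine ⟨mk ℂ _ hv, (mk_mem_fermatSeptic_iff _ hv).2 ?_, c ^ 7, pow_ne_zero 7 hc, ?_, ?_, ?_⟩
  · simp only [fermatForm, Matrix.cons_val, hx₀, hx₁, hx₂]
    ring
  all_goals simp [hrep, mul_pow, hx₀, hx₁, hx₂]

section DiagAct

variable {ζ : ℂ}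

theorem diagAct_apply_pow_seven (hζ : ζ ^ 7 = 1) (g : ZMod 7 × ZMod 7) (v : Fin 3 → ℂ)
    (i : Fin 3) : diagAct ζ g v i ^ 7 = v i ^ 7 := by
  have hpow (k : ℕ) : (ζ ^ k) ^ 7 = 1 := by rw [← pow_mul, mul_comm, pow_mul, hζ, one_pow]
  fin_cases i <;> simp [diagAct, mul_pow, hpow]

theorem fermatForm_diagAct (hζ : ζ ^ 7 = 1) (g : ZMod 7 × ZMod 7) (v : Fin 3 → ℂ) :
    fermatForm 7 (diagAct ζ g v) = fermatForm 7 v := by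
  simp only [fermatForm, diagAct_apply_pow_seven hζ]

theorem diagAct_ne_zero (hζ : ζ ^ 7 = 1) (g : ZMod 7 × ZMod 7) {v : Fin 3 → ℂ} (hv : v ≠ 0) :
    diagAct ζ g v ≠ 0 := fun h =>
  hv <| funext fun i => by
    simpa [h] using (diagAct_apply_pow_seven hζ g v i).symm

theorem exists_diagAct_eq_smul_of_pow_cross_eq (hζ : IsPrimitiveRoot ζ 7) {x y : Fin 3 → ℂ}
    (hx : fermatForm 7 x = 0) (hy : fermatForm 7 y = 0) (hx₁₂ : ¬(x 1 = 0 ∧ x 2 = 0))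
    (hy₁₂ : ¬(y 1 = 0 ∧ y 2 = 0)) (h : x 1 ^ 7 * y 2 ^ 7 = x 2 ^ 7 * y 1 ^ 7) :
    ∃ g : ZMod 7 × ZMod 7, ∃ c : ℂ, c ≠ 0 ∧ diagAct ζ g x = c • y := by
  obtain ⟨μ, hμ⟩ := exists_forall_eq_mul_of_cross_eq (x := fun i => x i ^ 7)
    (y := fun i => y i ^ 7) hx hy (by simpa using hy₁₂) h
  obtain ⟨c, rfl, hc₀⟩ := exists_pow_eq_and_mul_eq (by norm_num) (hμ 0)
  have hc : c ≠ 0 := by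
    rintro rfl
    exact hx₁₂ ⟨by simpa using hμ 1, by simpa using hμ 2⟩
  have twist (i : Fin 3) : ∃ a : ZMod 7, ζ ^ a.val * x i = c * y i := by
    obtain ⟨k, hk, hkx⟩ := hζ.exists_pow_mul_eq_of_pow_eq_pow (by norm_num)
      (x := c * y i) (y := x i) (by rw [mul_pow, hμ i])
    exact ⟨k, by rwa [ZMod.val_natCast_of_lt hk]⟩
  obtain ⟨a, ha⟩ := twist 1
  obtain ⟨b, hb⟩ := twist 2
  refine ⟨(a, b), c, hc, funext fun i => ?_⟩
  fin_cases i
  · exact hc₀.symm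
  · exact ha
  · exact hb

theorem pow_cross_eq_of_diagAct_eq_smul (hζ : ζ ^ 7 = 1) {g : ZMod 7 × ZMod 7} {c : ℂ}
    {x y : Fin 3 → ℂ} (h : diagAct ζ g x = c • y) : x 1 ^ 7 * y 2 ^ 7 = x 2 ^ 7 * y 1 ^ 7 := by
  have hpow (i : Fin 3) : x i ^ 7 = c ^ 7 * y i ^ 7 := by
    rw [← diagAct_apply_pow_seven hζ g x i, h, Pi.smul_apply, smul_eq_mul, mul_pow]
  rw [hpow 1, hpow 2]
  ring

theorem rep_pow_cross_eq_iff_exists_diagAct_eq_smul (hζ : IsPrimitiveRoot ζ 7)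
    {p q : ℙ ℂ (Fin 3 → ℂ)} (hp : p ∈ fermatSeptic) (hq : q ∈ fermatSeptic) :
    p.rep 1 ^ 7 * q.rep 2 ^ 7 = p.rep 2 ^ 7 * q.rep 1 ^ 7 ↔
      ∃ g : ZMod 7 × ZMod 7, ∃ c : ℂ, c ≠ 0 ∧ diagAct ζ g p.rep = c • q.rep :=
  ⟨exists_diagAct_eq_smul_of_pow_cross_eq hζ hp hq
      (not_rep_one_eq_zero_and_rep_two_eq_zero hp) (not_rep_one_eq_zero_and_rep_two_eq_zero hq),
    fun ⟨_, _, _, h⟩ => pow_cross_eq_of_diagAct_eq_smul hζ.pow_eq_one h⟩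

noncomputable def diagOrbit (hζ : ζ ^ 7 = 1) (v : Fin 3 → ℂ) (hv : v ≠ 0)
    (g : ZMod 7 × ZMod 7) : ℙ ℂ (Fin 3 → ℂ) :=
  mk ℂ (diagAct ζ g v) (diagAct_ne_zero hζ g hv)

theorem diagOrbit_eq_iff (hζ : ζ ^ 7 = 1) {v : Fin 3 → ℂ} (hv : v ≠ 0) (g : ZMod 7 × ZMod 7)
    (q : ℙ ℂ (Fin 3 → ℂ)) :
    diagOrbit hζ v hv g = q ↔ ∃ c : ℂ, c ≠ 0 ∧ diagAct ζ g v = c • q.rep := by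
  conv_lhs => rw [← q.mk_rep, diagOrbit, mk_eq_mk_iff']
  constructor
  · rintro ⟨c, hc⟩
    refine ⟨c, ?_, hc.symm⟩
    rintro rfl
    exact diagAct_ne_zero hζ g hv (by rw [← hc, zero_smul])
  · rintro ⟨c, -, hc⟩
    exact ⟨c, hc.symm⟩

theorem diagOrbit_injective (hζ : IsPrimitiveRoot ζ 7) {v : Fin 3 → ℂ} (hv : ∀ i, v i ≠ 0) :
    Function.Injective (diagOrbit hζ.pow_eq_one v (fun h => hv 0 (congrFun h 0))) := by
  rintro ⟨a, b⟩ ⟨a', b'⟩ h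
  obtain ⟨c, hc⟩ := (mk_eq_mk_iff' ℂ _ _ _ _).1 h
  have h₀ := congrFun hc 0
  have h₁ := congrFun hc 1
  have h₂ := congrFun hc 2
  simp only [diagAct, Pi.smul_apply, smul_eq_mul, Matrix.cons_val] at h₀ h₁ h₂
  obtain rfl : c = 1 := (mul_eq_right₀ (hv 0)).1 h₀
  rw [one_mul] at h₁ h₂
  rw [hζ.pow_zmod_val_injective (mul_right_cancel₀ (hv 1) h₁),
    hζ.pow_zmod_val_injective (mul_right_cancel₀ (hv 2) h₂)]

theorem fiber_eq_range_diagOrbit (hζ : IsPrimitiveRoot ζ 7) {q : ℙ ℂ (Fin 3 → ℂ)}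
    (hq : q ∈ fermatSeptic) {w : ℂ × ℂ} {c : ℂ} (hc : c ≠ 0) (hq₁ : q.rep 1 ^ 7 = c * w.1)
    (hq₂ : q.rep 2 ^ 7 = c * w.2) :
    {p ∈ fermatSeptic | p.rep 1 ^ 7 * w.2 = p.rep 2 ^ 7 * w.1} =
      Set.range (diagOrbit hζ.pow_eq_one q.rep q.rep_nonzero) := by
  have mem_fiber_iff (p : ℙ ℂ (Fin 3 → ℂ)) : p.rep 1 ^ 7 * w.2 = p.rep 2 ^ 7 * w.1 ↔
      q.rep 1 ^ 7 * p.rep 2 ^ 7 = q.rep 2 ^ 7 * p.rep 1 ^ 7 := by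
    rw [hq₁, hq₂]
    constructor
    · intro h
      linear_combination -c * h
    · intro h
      apply mul_left_cancel₀ hc
      linear_combination -h
  ext p
  simp only [Set.mem_ofPred_eq, Set.mem_range, diagOrbit_eq_iff, mem_fiber_iff]
  constructor
  · rintro ⟨hp, h⟩
    exact (rep_pow_cross_eq_iff_exists_diagAct_eq_smul hζ hq hp).1 h
  · rintro ⟨g, c', hc', hg⟩
    refine ⟨?_, pow_cross_eq_of_diagAct_eq_smul hζ.pow_eq_one hg⟩
    have hform := congrArg (fermatForm 7) hg
    rw [fermatForm_diagAct hζ.pow_eq_one, mem_fermatSeptic_iff.1 hq, fermatForm_smul, eq_comm,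
      mul_eq_zero] at hform
    exact hform.resolve_left (pow_ne_zero 7 hc')

end DiagAct

/-- The map `π : F → ℙ¹`, `(x₀:x₁:x₂) ↦ (x₁⁷ : x₂⁷)`, is a well-defined morphism
(on `F`, `x₁` and `x₂` never vanish simultaneously), it is surjective, it has degree `49`
(each fiber over a point `(w₁ : w₂)` away from the three branch points `(0:1)`, `(1:0)`,
`(-1:1)` consists of exactly `49` points), and its fibers are exactly the orbits of the
`(ℤ/7)²`-action `φ` on `F`.  Here `π(p) = (w₁ : w₂)` is expressed by the cross-ratio
condition `x₁⁷ w₂ = x₂⁷ w₁` on a representative. -/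
theorem fermat_septic_quotient_map (ζ : ℂ) (hζ : IsPrimitiveRoot ζ 7) :
    (∀ p ∈ fermatSeptic, ¬(p.rep 1 = 0 ∧ p.rep 2 = 0)) ∧
    (∀ w : ℂ × ℂ, w ≠ 0 → ∃ p ∈ fermatSeptic, p.rep 1 ^ 7 * w.2 = p.rep 2 ^ 7 * w.1) ∧
    (∀ w : ℂ × ℂ, w.1 ≠ 0 → w.2 ≠ 0 → w.1 + w.2 ≠ 0 →
      {p ∈ fermatSeptic | p.rep 1 ^ 7 * w.2 = p.rep 2 ^ 7 * w.1}.ncard = 49) ∧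
    (∀ p ∈ fermatSeptic, ∀ q ∈ fermatSeptic,
      (p.rep 1 ^ 7 * q.rep 2 ^ 7 = p.rep 2 ^ 7 * q.rep 1 ^ 7 ↔
        ∃ g : ZMod 7 × ZMod 7, ∃ c : ℂ, c ≠ 0 ∧ diagAct ζ g p.rep = c • q.rep)) := by
  refine ⟨fun p hp => not_rep_one_eq_zero_and_rep_two_eq_zero hp, fun w hw => ?_,
    fun w hw₁ hw₂ hw₁₂ => ?_,
    fun p hp q hq => rep_pow_cross_eq_iff_exists_diagAct_eq_smul hζ hp hq⟩
  · obtain ⟨p, hp, c, -, -, h₁, h₂⟩ := exists_mem_fermatSeptic_rep_pow_eq w hw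
    exact ⟨p, hp, by rw [h₁, h₂]; ring⟩
  · obtain ⟨q, hq, c, hc, h₀, h₁, h₂⟩ :=
      exists_mem_fermatSeptic_rep_pow_eq w fun h => hw₁ (congrArg Prod.fst h)
    have hq_ne (i : Fin 3) : q.rep i ≠ 0 := by
      refine (pow_ne_zero_iff (n := 7) (by norm_num)).1 ?_
      fin_cases i
      · exact h₀ ▸ mul_ne_zero hc (neg_ne_zero.2 hw₁₂)
      · exact h₁ ▸ mul_ne_zero hc hw₁
      · exact h₂ ▸ mul_ne_zero hc hw₂
    rw [fiber_eq_range_diagOrbit hζ hq hc h₁ h₂, Set.ncard_range_of_injective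
      (diagOrbit_injective hζ hq_ne)]
    simp
end
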